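/- arXiv:0906.3471 — 3 statements merged into one kernel-verified Lean document; each statement's English description precedes it below -/
import Mathlib

section
/- Let ζ be a primitive n-th root of unity in a field K of characteristic zero with n odd. Then the classical Gaussian sum G = Σ_{i=0}^{n-1} ζ^{i²} satisfies G² = n if n ≡ 1 (mod 4) and G² = -n if n ≡ 3 (mod 4). -/
/-!
Write `G(ζ, n) = ∑_{i<n} ζ^(i²)`. For coprime `a, b` the residues `b x + a y` (`x < a`, `y < b`)
run once through `ℤ/ab`, and `(b x + a y)² ≡ b² x² + a² y² (mod ab)`, so
`G(ζ, ab) = G(ζ^(b²), a) G(ζ^(a²), b)`. For an odd prime `p`, writing `i = u + p^(k+1) v` turns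
the sum over `v` into a full character sum in `ζ^(p^(k+1))`, which kills every `u` prime to `p`;
hence `G(ζ, p^(k+2)) = p G(ζ^(p²), p^k)`. Finally `G(ζ, p)` is the Gauss sum of the Legendre
symbol, whose square is `χ₄(p) p`. As `χ₄` is multiplicative and `χ₄(p)² = 1`, induction over
the factorisation of `n` gives `G(ζ, n)² = χ₄(n) n`.
-/

open Finset

theorem Finset.sum_range_mul_eq_sum_sum {M : Type*} [AddCommMonoid M] (f : ℕ → M) (m n : ℕ) :
    ∑ i ∈ range (m * n), f i = ∑ x ∈ range m, ∑ y ∈ range n, f (y + n * x) := by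
  rw [← Fin.sum_univ_eq_sum_range, ← finProdFinEquiv.sum_comp, Fintype.sum_prod_type,
    ← Fin.sum_univ_eq_sum_range (fun x => ∑ y ∈ range n, f (y + n * x))]
  exact Fintype.sum_congr _ _ fun x => Fin.sum_univ_eq_sum_range (fun y => f (y + n * x)) n

theorem Finset.sum_range_mul_ite_dvd {M : Type*} [AddCommMonoid M] (f : ℕ → M) {p : ℕ}
    (hp : 0 < p) (n : ℕ) :
    ∑ i ∈ range (n * p), (if p ∣ i then f i else 0) = ∑ s ∈ range n, f (p * s) := by
  rw [sum_range_mul_eq_sum_sum]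
  refine sum_congr rfl fun s _ => ?_
  rw [sum_eq_single_of_mem 0 (mem_range.mpr hp), if_pos ⟨s, by ring⟩, zero_add]
  intro r hr hr0
  rw [if_neg fun hpr => hr0 (Nat.eq_zero_of_dvd_of_lt
    ((Nat.dvd_add_left (dvd_mul_right p s)).mp hpr) (mem_range.mp hr))]

theorem Finset.sum_range_mul_eq_sum_sum_mod_of_coprime {M : Type*} [AddCommMonoid M]
    {a b : ℕ} (hab : a.Coprime b) (f : ℕ → M) :
    ∑ i ∈ range (a * b), f i = ∑ x ∈ range a, ∑ y ∈ range b, f ((b * x + a * y) % (a * b)) := by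
  rw [← sum_product']
  set g : ℕ × ℕ → ℕ := fun q => (b * q.1 + a * q.2) % (a * b)
  have hmaps : Set.MapsTo g (range a ×ˢ range b : Finset _) (range (a * b)) := by
    rintro ⟨x, y⟩ hq
    simp only [coe_product, coe_range, Set.mem_prod, Set.mem_Iio] at hq
    exact mem_range.mpr (Nat.mod_lt _ (Nat.mul_pos (by omega) (by omega)))
  have hinj : Set.InjOn g (range a ×ˢ range b : Finset _) := by
    rintro ⟨x, y⟩ hq ⟨x', y'⟩ hq' h
    simp only [coe_product, coe_range, Set.mem_prod, Set.mem_Iio] at hq hq'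
    obtain ⟨hxa, hyb⟩ := (Nat.modEq_and_modEq_iff_modEq_mul hab).mpr h
    have hx : b * x ≡ b * x' [MOD a] := by
      simpa [Nat.ModEq, Nat.add_mul_mod_self_left] using hxa
    have hy : a * y ≡ a * y' [MOD b] := by
      simpa [Nat.ModEq, Nat.mul_add_mod] using hyb
    rw [(hx.cancel_left_of_coprime hab).eq_of_lt_of_lt hq.1 hq'.1,
      (hy.cancel_left_of_coprime hab.symm).eq_of_lt_of_lt hq.2 hq'.2]
  exact (sum_nbij g hmaps hinj
    (surjOn_of_injOn_of_card_le g hmaps hinj (by simp)) fun _ _ => rfl).symm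

theorem ZMod.sum_range_natCast {M : Type*} [AddCommMonoid M] (n : ℕ) [NeZero n]
    (f : ZMod n → M) : ∑ i ∈ range n, f i = ∑ x, f x :=
  sum_nbij' (↑) ZMod.val (fun _ _ => mem_univ _) (fun x _ => mem_range.mpr x.val_lt)
    (fun _ hi => ZMod.val_natCast_of_lt (mem_range.mp hi)) (fun x _ => ZMod.natCast_zmod_val x)
    fun _ _ => rfl

theorem ZMod.χ₄_nat_sq_of_odd {p : ℕ} (hp : Odd p) : χ₄ p ^ 2 = 1 := by
  rw [χ₄_eq_neg_one_pow (Nat.odd_iff.mp hp), ← pow_mul, mul_comm, pow_mul, neg_one_sq, one_pow]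

theorem IsPrimitiveRoot.geom_sum_pow {R : Type*} [CommRing R] [IsDomain R] {ω : R} {n : ℕ}
    (hω : IsPrimitiveRoot ω n) (c : ℕ) :
    ∑ v ∈ range n, (ω ^ c) ^ v = if n ∣ c then (n : R) else 0 := by
  split_ifs with hc
  · simp [(hω.pow_eq_one_iff_dvd c).mpr hc]
  · have hne : ω ^ c - 1 ≠ 0 := sub_ne_zero.mpr fun h => hc ((hω.pow_eq_one_iff_dvd c).mp h)
    have hgeom := mul_geom_sum (ω ^ c) n
    rw [← pow_mul, mul_comm c n, pow_mul, hω.pow_eq_one, one_pow, sub_self] at hgeom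
    exact (mul_eq_zero.mp hgeom).resolve_left hne

theorem IsPrimitiveRoot.pow_sq_of_coprime {M : Type*} [CommMonoid M] {ζ : M} {a b : ℕ}
    (hζ : IsPrimitiveRoot ζ (a * b)) (hb : b ≠ 0) (hab : a.Coprime b) :
    IsPrimitiveRoot (ζ ^ (b ^ 2)) a := by
  have h := hζ.pow_of_dvd hb (dvd_mul_left b a)
  rw [Nat.mul_div_cancel _ (Nat.pos_of_ne_zero hb)] at h
  simpa [sq, pow_mul] using h.pow_of_coprime b hab.symm

theorem sum_addChar_sq_eq_gaussSum {F R : Type*} [Field F] [Fintype F] [DecidableEq F]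
    [CommRing R] [IsDomain R] (hF : ringChar F ≠ 2) {ψ : AddChar F R} (hψ : ψ ≠ 1) :
    ∑ x, ψ (x ^ 2) = gaussSum ((quadraticChar F).ringHomComp (Int.castRingHom R)) ψ := by
  have hfiber (b : F) : ∑ x with x ^ 2 = b, ψ (x ^ 2) = (quadraticChar F b + 1 : ℤ) * ψ b := by
    rw [← quadraticChar_card_sqrts hF b, sum_congr rfl fun x hx => congrArg ψ (mem_filter.mp hx).2,
      sum_const, nsmul_eq_mul]
    simp
  rw [← sum_fiberwise univ (· ^ 2), sum_congr rfl fun b _ => hfiber b]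
  simp only [Int.cast_add, Int.cast_one, add_mul, one_mul, sum_add_distrib,
    AddChar.sum_eq_zero_of_ne_one hψ, add_zero]
  rfl

def classicalGaussSum {R : Type*} [Semiring R] (ζ : R) (n : ℕ) : R :=
  ∑ i ∈ range n, ζ ^ (i ^ 2)

section

variable {R : Type*} [CommRing R]

theorem classicalGaussSum_mul_of_coprime {a b : ℕ} (hab : a.Coprime b) {ζ : R}
    (hζ : ζ ^ (a * b) = 1) :
    classicalGaussSum ζ (a * b) =
      classicalGaussSum (ζ ^ (b ^ 2)) a * classicalGaussSum (ζ ^ (a ^ 2)) b := by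
  unfold classicalGaussSum
  rw [sum_range_mul_eq_sum_sum_mod_of_coprime hab, sum_mul_sum]
  refine sum_congr rfl fun x _ => sum_congr rfl fun y _ => ?_
  have hsq : (b * x + a * y) ^ 2 = b ^ 2 * x ^ 2 + a ^ 2 * y ^ 2 + a * b * (2 * x * y) := by ring
  rw [pow_eq_pow_mod _ hζ, ← Nat.pow_mod, ← pow_eq_pow_mod _ hζ, hsq, pow_add,
    pow_mul ζ (a * b), hζ, one_pow, mul_one, pow_add, pow_mul, pow_mul]

variable [IsDomain R]

theorem classicalGaussSum_prime_pow_add_two {p k : ℕ} (hp : p.Prime) (hp2 : p ≠ 2) {ζ : R}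
    (hζ : IsPrimitiveRoot ζ (p ^ (k + 2))) :
    classicalGaussSum ζ (p ^ (k + 2)) = p * classicalGaussSum (ζ ^ (p ^ 2)) (p ^ k) := by
  set ω := ζ ^ p ^ (k + 1)
  have hω : IsPrimitiveRoot ω p := hζ.pow (pow_pos hp.pos _) (by ring)
  have hterm (u v : ℕ) : ζ ^ ((u + p ^ (k + 1) * v) ^ 2) = ζ ^ (u ^ 2) * (ω ^ (2 * u)) ^ v := by
    have hsq : (u + p ^ (k + 1) * v) ^ 2 =
        u ^ 2 + p ^ (k + 1) * (2 * u * v) + p ^ (k + 2) * (p ^ k * v ^ 2) := by ring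
    rw [hsq, pow_add, pow_add, pow_mul ζ (p ^ (k + 2)), hζ.pow_eq_one, one_pow, mul_one,
      ← pow_mul, ← pow_mul]
  have hdvd (u : ℕ) : p ∣ 2 * u ↔ p ∣ u :=
    Nat.Coprime.dvd_mul_left ((Nat.coprime_primes hp Nat.prime_two).mpr hp2)
  calc classicalGaussSum ζ (p ^ (k + 2))
      = ∑ u ∈ range (p ^ (k + 1)), ζ ^ (u ^ 2) * ∑ v ∈ range p, (ω ^ (2 * u)) ^ v := by
        rw [classicalGaussSum, pow_succ', sum_range_mul_eq_sum_sum, sum_comm]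
        simp only [hterm, mul_sum]
    _ = ∑ u ∈ range (p ^ k * p), if p ∣ u then p * ζ ^ (u ^ 2) else 0 := by
        rw [← pow_succ]
        refine sum_congr rfl fun u _ => ?_
        rw [hω.geom_sum_pow, mul_ite, mul_zero, mul_comm (ζ ^ _)]
        exact if_congr (hdvd u) rfl rfl
    _ = p * classicalGaussSum (ζ ^ (p ^ 2)) (p ^ k) := by
        rw [sum_range_mul_ite_dvd _ hp.pos, classicalGaussSum, mul_sum]
        simp only [mul_pow, pow_mul]

variable [CharZero R]

theorem sq_classicalGaussSum_of_prime {p : ℕ} (hp : p.Prime) (hp2 : p ≠ 2) {ζ : R}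
    (hζ : IsPrimitiveRoot ζ p) :
    classicalGaussSum ζ p ^ 2 = ZMod.χ₄ p * p := by
  have : Fact p.Prime := ⟨hp⟩
  have hF : ringChar (ZMod p) ≠ 2 := by rwa [ZMod.ringChar_zmod_n]
  set ψ := AddChar.zmodChar p hζ.pow_eq_one
  have hψ : ψ ≠ 1 := fun h => hζ.ne_one hp.one_lt <| by
    have h1 := DFunLike.congr_fun h ((1 : ℕ) : ZMod p)
    rwa [AddChar.zmodChar_apply', pow_one] at h1
  have hsum : classicalGaussSum ζ p = ∑ x : ZMod p, ψ (x ^ 2) := by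
    rw [← ZMod.sum_range_natCast, classicalGaussSum]
    refine sum_congr rfl fun i _ => ?_
    rw [← Nat.cast_pow, AddChar.zmodChar_apply']
  set χ := (quadraticChar (ZMod p)).ringHomComp (Int.castRingHom R)
  have hχ : χ ≠ 1 := (MulChar.ringHomComp_ne_one_iff (Int.castRingHom R).injective_int).mpr
    (quadraticChar_ne_one hF)
  rw [hsum, sum_addChar_sq_eq_gaussSum hF hψ,
    gaussSum_sq hχ ((quadraticChar_isQuadratic _).comp _) (AddChar.IsPrimitive.of_ne_one hψ)]
  simp [χ, quadraticChar_neg_one hF]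

theorem sq_classicalGaussSum_of_prime_pow {p : ℕ} (hp : p.Prime) (hp2 : p ≠ 2) (k : ℕ) {ζ : R}
    (hζ : IsPrimitiveRoot ζ (p ^ k)) :
    classicalGaussSum ζ (p ^ k) ^ 2 = ZMod.χ₄ (p ^ k : ℕ) * (p ^ k : ℕ) := by
  induction k using Nat.twoStepInduction generalizing ζ with
  | zero => simp [classicalGaussSum]
  | one => simpa using sq_classicalGaussSum_of_prime hp hp2 (by simpa using hζ)
  | more k ih _ =>
    rw [classicalGaussSum_prime_pow_add_two hp hp2 hζ, mul_pow,
      ih (hζ.pow (pow_pos hp.pos _) (by ring))]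
    push_cast [pow_add, map_mul, map_pow, ZMod.χ₄_nat_sq_of_odd (hp.odd_of_ne_two hp2)]
    ring

theorem sq_classicalGaussSum {n : ℕ} (hn : Odd n) {ζ : R} (hζ : IsPrimitiveRoot ζ n) :
    classicalGaussSum ζ n ^ 2 = ZMod.χ₄ n * n := by
  induction n using Nat.recOnPosPrimePosCoprime generalizing ζ with
  | prime_pow p k hp hk =>
    have hp2 : p ≠ 2 := by
      rintro rfl
      exact Nat.not_even_iff_odd.mpr hn ((Nat.even_pow' hk.ne').mpr even_two)
    exact sq_classicalGaussSum_of_prime_pow hp hp2 k hζ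
  | zero => exact absurd hn Nat.not_odd_zero
  | one => simp [classicalGaussSum]
  | coprime a b ha hb hab iha ihb =>
    obtain ⟨ha_odd, hb_odd⟩ := Nat.odd_mul.mp hn
    rw [classicalGaussSum_mul_of_coprime hab hζ.pow_eq_one, mul_pow,
      iha ha_odd (hζ.pow_sq_of_coprime (by omega) hab),
      ihb hb_odd ((mul_comm a b ▸ hζ).pow_sq_of_coprime (by omega) hab.symm)]
    push_cast [map_mul]
    ring

end

theorem classical_gauss_sq_general {K : Type*} [Field K] [CharZero K]
    (n : ℕ) (hodd : Odd n) (ζ : K) (hζ : IsPrimitiveRoot ζ n) :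
    (n % 4 = 1 → (∑ i ∈ Finset.range n, ζ ^ (i ^ 2)) ^ 2 = (n : K)) ∧
    (n % 4 = 3 → (∑ i ∈ Finset.range n, ζ ^ (i ^ 2)) ^ 2 = -(n : K)) := by
  have h : classicalGaussSum ζ n ^ 2 = ZMod.χ₄ n * n := sq_classicalGaussSum hodd hζ
  refine ⟨fun h4 => ?_, fun h4 => ?_⟩
  · rw [classicalGaussSum, ZMod.χ₄_nat_one_mod_four h4] at h
    simpa using h
  · rw [classicalGaussSum, ZMod.χ₄_nat_three_mod_four h4] at h
    simpa using h

/-- For an odd positive integer `n` and a primitive `n`-th root of unity `ζ` in a field `K`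
of characteristic zero, the classical Gaussian sum `G = Σ ζ^(i²)` satisfies `G² = n` if
`n ≡ 1 (mod 4)` and `G² = -n` if `n ≡ 3 (mod 4)`. -/
theorem classical_gauss_sq {K : Type*} [Field K] [CharZero K]
    (n : ℕ) (hn : 0 < n) (hodd : Odd n) (ζ : K) (hζ : IsPrimitiveRoot ζ n) :
    (n % 4 = 1 → (∑ i ∈ Finset.range n, ζ ^ (i ^ 2)) ^ 2 = (n : K)) ∧
    (n % 4 = 3 → (∑ i ∈ Finset.range n, ζ ^ (i ^ 2)) ^ 2 = -(n : K)) :=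
  classical_gauss_sq_general n hodd ζ hζ
end

section
/- For a modular datum, the fusion ring F is a commutative associative ring with unit b_o, and the algebra F ⊗ K is isomorphic as a K-algebra to the function algebra K^I via b ↦ (ξ_i(b))_{i∈I}. -/
open Finset

/-- A modular datum over a field `K` of characteristic zero: a finite index set `I` with a
distinguished element `o`, an involution `star` fixing `o`, a symmetric Verlinde matrix `S`
with nonzero first column, a diagonal Dehn matrix with entries `T i` of finite order
satisfying `T (star i) = T i`, such that `S² = n·C` for a nonzero global dimension `n`
(where `C = (δ_{i,j*})`), the matrices `T⁻¹ST⁻¹` and `STS` are proportional, and the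
Verlinde numbers `N_{ij}^k` are nonnegative integers. -/
structure ModularDatum (K : Type*) [Field K] [CharZero K]
    (I : Type*) [Fintype I] [DecidableEq I] where
  o : I
  star : I → I
  S : Matrix I I K
  T : I → K
  n : K
  star_involutive : Function.Involutive star
  star_o : star o = o
  S_symm : ∀ i j, S i j = S j i
  S_io_ne : ∀ i, S i o ≠ 0
  T_star : ∀ i, T (star i) = T i
  T_order : ∃ N : ℕ, 0 < N ∧ ∀ i, T i ^ N = 1
  n_ne : n ≠ 0
  S_sq : ∀ i k, (∑ j, S i j * S j k) = n * (if i = star k then 1 else 0)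
  proportional : ∃ c : K, ∀ i j,
    (T i)⁻¹ * S i j * (T j)⁻¹ = c * ∑ k, S i k * T k * S k j
  verlinde : ∀ i j k, ∃ m : ℕ,
    (1 / n) * ∑ l, S i l * S j l * S (star k) l / S o l = (m : K)

namespace ModularDatum

variable {K : Type*} [Field K] [CharZero K] {I : Type*} [Fintype I] [DecidableEq I]
variable (d : ModularDatum K I)

/-- The `i`-th dimension `n_i = s_{io}`. -/
def ni (i : I) : K := d.S i d.o

/-- The Gaussian sum `g = Σ_i n_i² t_i`. -/
def gauss : K := ∑ i, d.ni i ^ 2 * d.T i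

/-- The reciprocal Gaussian sum `g' = Σ_i n_i² / t_i`. -/
def gauss' : K := ∑ i, d.ni i ^ 2 * (d.T i)⁻¹

/-- The Verlinde numbers `N_{ij}^k = (1/n) Σ_l s_{il} s_{jl} s_{k*l} / s_{ol}`. -/
def Nc (i j k : I) : K := (1 / d.n) * ∑ l, d.S i l * d.S j l * d.S (d.star k) l / d.S d.o l

end ModularDatum

namespace ModularDatum

variable {K : Type*} [Field K] [CharZero K] {I : Type*} [Fintype I] [DecidableEq I]

/-- The fusion multiplication on `F ⊗ K ≅ K^I` (coordinates with respect to the basis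
`{b_i}`), given by the structure constants `N_{ij}^k`. -/
def fmul (d : ModularDatum K I) (x y : I → K) : I → K :=
  fun k => ∑ i, ∑ j, x i * y j * d.Nc i j k

/-- The coordinate vector of the unit element `b_o`. -/
def funit (d : ModularDatum K I) : I → K := fun k => if k = d.o then 1 else 0

/-- The map `F ⊗ K → K^I`, `b ↦ (ξ_q(b))_q`, where `ξ_q(b_i) = s_{iq}/n_q`. -/
def xiMap (d : ModularDatum K I) (x : I → K) : I → K :=
  fun q => ∑ i, x i * (d.S i q / d.ni q)

end ModularDatum

/-! The matrix `ξ_q(b_i) = s_{iq}/n_q` is `S` with rescaled columns, and `S` is invertible since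
`S · (S with columns permuted by *) = n · 1`. The Verlinde formula for `N_{ij}^k` says precisely that
each `ξ_q` is multiplicative on the basis, `Σ_k N_{ij}^k ξ_q(b_k) = ξ_q(b_i) ξ_q(b_j)`, so `ξ` is a
bijective multiplicative map onto `K^I`, and commutativity, associativity and the unit of the
fusion product are pulled back from the pointwise ones of `K^I`. -/

namespace ModularDatum

variable {K : Type*} [Field K] [CharZero K] {I : Type*} [Fintype I] [DecidableEq I]
variable (d : ModularDatum K I)

open Matrix

lemma S_o_ne (q : I) : d.S d.o q ≠ 0 := d.S_symm d.o q ▸ d.S_io_ne q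

lemma S_mul_S_submatrix_star : d.S * d.S.submatrix id d.star = d.n • 1 := by
  ext i q
  simp [mul_apply, one_apply, d.S_sq, d.star_involutive q]

lemma S_mul_inv_smul_S_submatrix_star : d.S * (d.n⁻¹ • d.S.submatrix id d.star) = 1 := by
  rw [Matrix.mul_smul, S_mul_S_submatrix_star, inv_smul_smul₀ d.n_ne]

lemma isUnit_S : IsUnit d.S := .of_mul_eq_one _ d.S_mul_inv_smul_S_submatrix_star

lemma S_submatrix_star_mul_S : d.S.submatrix id d.star * d.S = d.n • 1 := by
  have h := mul_eq_one_comm.1 d.S_mul_inv_smul_S_submatrix_star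
  rwa [Matrix.smul_mul, inv_smul_eq_iff₀ d.n_ne] at h

lemma sum_S_star_mul_S (l q : I) :
    ∑ k, d.S (d.star k) l * d.S k q = d.n * if l = q then 1 else 0 := by
  have := congrFun (congrFun d.S_submatrix_star_mul_S l) q
  simpa [mul_apply, one_apply, d.S_symm l] using this

lemma sum_Nc_mul_S (i j q : I) :
    ∑ k, d.Nc i j k * d.S k q = d.S i q * d.S j q / d.S d.o q := by
  have h : ∀ k l, d.S i l * d.S j l * d.S (d.star k) l / d.S d.o l * d.S k q =
      d.S i l * d.S j l / d.S d.o l * (d.S (d.star k) l * d.S k q) := fun k l => by ring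
  simp_rw [Nc, mul_assoc (1 / d.n), Finset.sum_mul, h]
  rw [← Finset.mul_sum, Finset.sum_comm]
  simp_rw [← Finset.mul_sum, sum_S_star_mul_S, mul_ite, mul_one, mul_zero,
    Finset.sum_ite_eq', Finset.mem_univ, if_true]
  field_simp [d.n_ne]

lemma sum_Nc_mul_xi (i j q : I) :
    ∑ k, d.Nc i j k * (d.S k q / d.ni q) = d.S i q / d.ni q * (d.S j q / d.ni q) := by
  have hq : d.ni q = d.S d.o q := d.S_symm q d.o
  simp_rw [← mul_div_assoc, ← Finset.sum_div, sum_Nc_mul_S, hq]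
  field_simp [d.S_o_ne q]

lemma xiMap_fmul (x y : I → K) :
    d.xiMap (d.fmul x y) = fun q => d.xiMap x q * d.xiMap y q := by
  funext q
  calc ∑ k, (∑ i, ∑ j, x i * y j * d.Nc i j k) * (d.S k q / d.ni q)
      = ∑ i, ∑ j, x i * y j * ∑ k, d.Nc i j k * (d.S k q / d.ni q) := by
        simp_rw [Finset.sum_mul, Finset.mul_sum, mul_assoc]
        rw [Finset.sum_comm]
        exact Finset.sum_congr rfl fun i _ => Finset.sum_comm
    _ = ∑ i, ∑ j, x i * (d.S i q / d.ni q) * (y j * (d.S j q / d.ni q)) := by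
        refine Finset.sum_congr rfl fun i _ => Finset.sum_congr rfl fun j _ => ?_
        rw [sum_Nc_mul_xi]
        ring
    _ = d.xiMap x q * d.xiMap y q := (Finset.sum_mul_sum _ _ _ _).symm

lemma xiMap_funit : d.xiMap d.funit = fun _ => 1 := by
  funext q
  simp [xiMap, funit, ni, d.S_symm q, d.S_o_ne]

lemma xiMap_eq_vecMul : d.xiMap = fun x => x ᵥ* (d.S * diagonal fun q => (d.ni q)⁻¹) := by
  funext x q
  simp [xiMap, vecMul, dotProduct, div_eq_mul_inv]

lemma xiMap_bijective : Function.Bijective d.xiMap := by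
  have h : IsUnit (d.S * diagonal fun q => (d.ni q)⁻¹) :=
    d.isUnit_S.mul <| isUnit_diagonal.2 <| Pi.isUnit_iff.2 fun q =>
      (inv_ne_zero (d.S_io_ne q)).isUnit
  rw [xiMap_eq_vecMul]
  exact ⟨vecMul_injective_iff_isUnit.2 h, vecMul_surjective_iff_isUnit.2 h⟩

end ModularDatum

/-- For a modular datum, the fusion ring is a commutative associative ring with unit `b_o`,
and `F ⊗ K` is isomorphic as a `K`-algebra to the function algebra `K^I` via
`b ↦ (ξ_i(b))_{i∈I}`. -/
theorem ModularDatum.fusion_ring_iso {K : Type*} [Field K] [CharZero K]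
    {I : Type*} [Fintype I] [DecidableEq I] (d : ModularDatum K I) :
    (∀ x y, d.fmul x y = d.fmul y x) ∧
    (∀ x y z, d.fmul (d.fmul x y) z = d.fmul x (d.fmul y z)) ∧
    (∀ x, d.fmul d.funit x = x) ∧
    Function.Bijective d.xiMap ∧
    (∀ x y, d.xiMap (d.fmul x y) = fun q => d.xiMap x q * d.xiMap y q) ∧
    d.xiMap d.funit = fun _ => 1 := by
  have hinj := d.xiMap_bijective.injective
  refine ⟨fun x y => hinj ?_, fun x y z => hinj ?_, fun x => hinj ?_,
    d.xiMap_bijective, d.xiMap_fmul, d.xiMap_funit⟩ <;>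
  · funext q
    simp only [xiMap_fmul, xiMap_funit]
    ring
end

section
/- For a modular datum, the entries of the Verlinde matrix satisfy s_{ij} = (t_o/(t_i t_j)) Σ_{k∈I} N_{ik}^j n_k t_k for all i, j ∈ I. -/
open Finset

/-!
Write `D = diag(t)`. Proportionality `D⁻¹SD⁻¹ = c·STS` together with `S² = nC`, `C² = 1` and
`CD = DC` gives `SD⁻¹SD⁻¹S = c n² D`; multiplying by `S` on the right and cancelling yields
`SD⁻¹S = c n·DSCD`. On the other side, the `(l, o)` entry of proportionality evaluates the inner
sum `Σ_k s_{lk} t_k n_k` in `Σ_k N_{ik}^j n_k t_k`, which collapses the latter to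
`(n c t_o)⁻¹ (SD⁻¹S)_{i j*} = t_i t_j s_{ij} / t_o`.
-/
theorem mul_inv_mul_eq_smul_of_proportional {K A : Type*} [Field K] [Ring A] [Algebra K A]
    {S D D' C : A} {n c : K} (hn : n ≠ 0) (hS : S * S = n • C) (hC : C * C = 1)
    (hCD : C * D = D * C) (hD : D' * D = 1) (hprop : D' * S * D' = c • (S * D * S)) :
    S * D' * S = (c * n) • (D * S * C * D) := by
  have hSDSDS : S * D' * S * D' * S = (c * n ^ 2) • D := by
    calc S * D' * S * D' * S = S * (D' * S * D') * S := by simp only [mul_assoc]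
      _ = c • (S * S * D * (S * S)) := by
        rw [hprop, mul_smul_comm, smul_mul_assoc]; simp only [mul_assoc]
      _ = c • (n • C * D * (n • C)) := by rw [hS]
      _ = (c * n ^ 2) • (C * D * C) := by
        simp only [smul_mul_assoc, mul_smul_comm, smul_smul]; ring_nf
      _ = (c * n ^ 2) • D := by rw [hCD, mul_assoc, hC, mul_one]
  have hSDSDC : S * D' * S * D' * C = (c * n) • (D * S) := by
    have : n • (S * D' * S * D' * C) = n • ((c * n) • (D * S)) := by
      rw [← mul_smul_comm, ← hS, smul_smul, ← mul_assoc, hSDSDS, smul_mul_assoc]; ring_nf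
    exact smul_right_injective A hn this
  calc S * D' * S = S * D' * S * D' * C * C * D := by
        rw [mul_assoc _ C C, hC, mul_one, mul_assoc _ D' D, hD, mul_one]
    _ = (c * n) • (D * S * C * D) := by rw [hSDSDC, smul_mul_assoc, smul_mul_assoc]

namespace ModularDatum

variable {K : Type*} [Field K] [CharZero K] {I : Type*} [Fintype I] [DecidableEq I]
variable (d : ModularDatum K I)

theorem T_ne_zero (i : I) : d.T i ≠ 0 := by
  obtain ⟨N, hN, hT⟩ := d.T_order
  exact fun h0 => by simpa [h0, zero_pow hN.ne'] using hT i

def C : Matrix I I K := Matrix.of fun i k => if i = d.star k then 1 else 0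

theorem S_mul_S : d.S * d.S = d.n • d.C := by
  ext i k
  simp [Matrix.mul_apply, d.S_sq, C]

theorem C_mul_C : d.C * d.C = 1 := by
  ext i k
  simp [Matrix.mul_apply, C, Matrix.one_apply, d.star_involutive _]

theorem C_mul_diagonal_T : d.C * Matrix.diagonal d.T = Matrix.diagonal d.T * d.C := by
  ext i k
  by_cases h : i = d.star k <;> simp [C, h, d.T_star]

theorem diagonal_T_inv_mul_diagonal_T :
    Matrix.diagonal (fun i => (d.T i)⁻¹) * Matrix.diagonal d.T = 1 := by
  rw [Matrix.diagonal_mul_diagonal, ← Matrix.diagonal_one]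
  exact congrArg _ (funext fun i => inv_mul_cancel₀ (d.T_ne_zero i))

section Proportional

variable {c : K}
  (hc : ∀ i j, (d.T i)⁻¹ * d.S i j * (d.T j)⁻¹ = c * ∑ k, d.S i k * d.T k * d.S k j)
include hc

theorem ne_zero_of_proportional : c ≠ 0 := by
  rintro rfl
  simpa [d.T_ne_zero, d.S_io_ne] using hc d.o d.o

theorem diagonal_T_inv_mul_S_mul_diagonal_T_inv :
    Matrix.diagonal (fun i => (d.T i)⁻¹) * d.S * Matrix.diagonal (fun i => (d.T i)⁻¹)
      = c • (d.S * Matrix.diagonal d.T * d.S) := by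
  ext i j
  rw [Matrix.mul_diagonal, Matrix.diagonal_mul, Matrix.smul_apply, hc, Matrix.mul_apply]
  simp [Matrix.mul_diagonal]

theorem sum_S_mul_T_inv_mul_S_star (i j : I) :
    ∑ l, d.S i l * (d.T l)⁻¹ * d.S l (d.star j) = c * d.n * (d.T i * d.S i j * d.T j) := by
  have h := mul_inv_mul_eq_smul_of_proportional d.n_ne d.S_mul_S d.C_mul_C
    d.C_mul_diagonal_T d.diagonal_T_inv_mul_diagonal_T (d.diagonal_T_inv_mul_S_mul_diagonal_T_inv hc)
  simpa [Matrix.mul_apply, Matrix.diagonal_apply, C, d.T_star,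
    d.star_involutive _] using congrFun₂ h i (d.star j)

end Proportional

theorem sum_Nc_mul_ni_mul_T (i j : I) :
    ∑ k, d.Nc i k j * d.ni k * d.T k
      = 1 / d.n * ∑ l, d.S i l * d.S (d.star j) l / d.S d.o l
          * ∑ k, d.S l k * d.T k * d.S k d.o := by
  simp only [Nc, ni, Finset.mul_sum, Finset.sum_mul]
  rw [Finset.sum_comm]
  refine Finset.sum_congr rfl fun l _ => Finset.sum_congr rfl fun k _ => ?_
  rw [d.S_symm k l]
  ring

theorem sum_Nc_mul_ni_mul_T_eq (i j : I) :
    ∑ k, d.Nc i k j * d.ni k * d.T k = d.T i * d.T j * d.S i j / d.T d.o := by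
  obtain ⟨c, hc⟩ := d.proportional
  have hn := d.n_ne
  have hTo := d.T_ne_zero d.o
  refine mul_left_cancel₀ (d.ne_zero_of_proportional hc) ?_
  calc c * ∑ k, d.Nc i k j * d.ni k * d.T k
      = 1 / d.n * ∑ l, d.S i l * d.S (d.star j) l / d.S d.o l
          * (c * ∑ k, d.S l k * d.T k * d.S k d.o) := by
        rw [sum_Nc_mul_ni_mul_T, Finset.mul_sum, Finset.mul_sum, Finset.mul_sum]
        exact Finset.sum_congr rfl fun l _ => by ring
    _ = 1 / (d.n * d.T d.o) * ∑ l, d.S i l * (d.T l)⁻¹ * d.S l (d.star j) := by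
        rw [Finset.mul_sum, Finset.mul_sum]
        refine Finset.sum_congr rfl fun l _ => ?_
        have hSo : d.S d.o l ≠ 0 := d.S_symm l d.o ▸ d.S_io_ne l
        rw [← hc, d.S_symm l d.o, d.S_symm (d.star j) l]
        field_simp
    _ = c * (d.T i * d.T j * d.S i j / d.T d.o) := by
        rw [d.sum_S_mul_T_inv_mul_S_star hc]
        field_simp

end ModularDatum

/-- For a modular datum, the Verlinde matrix entries satisfy
`s_{ij} = (t_o/(t_i t_j)) Σ_k N_{ik}^j n_k t_k`. -/
theorem ModularDatum.S_eq_sum_Nc {K : Type*} [Field K] [CharZero K]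
    {I : Type*} [Fintype I] [DecidableEq I] (d : ModularDatum K I) (i j : I) :
    d.S i j = (d.T d.o / (d.T i * d.T j)) * ∑ k, d.Nc i k j * d.ni k * d.T k := by
  rw [d.sum_Nc_mul_ni_mul_T_eq]
  field_simp [d.T_ne_zero i, d.T_ne_zero j, d.T_ne_zero d.o]
end
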